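/- Let k be a positive integer with k ≡ 0 (mod 4) and k ≥ 8. Then for every real x ∈ [k/4 − 1, k/2 − 2] the complex number ζ(2x+2)·ζ(k−2x−2) has zero imaginary part, and the function x ↦ Re( ζ(2x+2)·ζ(k−2x−2) ) is strictly increasing on the interval [k/4 − 1, k/2 − 2]. -/

import Mathlib

/-! For real `s, t > 1`, expanding `ζ(s) ζ(t)` as a double Dirichlet series and pairing the terms
`(m, n)` and `(n, m)` gives
`2 ζ(s) ζ(t) = ∑_{m,n ≥ 1} 2 (mn)^{-(s+t)/2} cosh((s-t)/2 · log(n/m))`.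
With `s = a`, `t = c - a` the weights depend only on `c`, and each `cosh` increases with `a`
for `a ≥ c/2`, strictly when `m ≠ n`. Taking `c = k` and `a = 2x + 2` gives the theorem. -/

open Complex Set

noncomputable def zetaSeries (s : ℝ) : ℝ := ∑' n : ℕ, ((n : ℝ) + 1) ^ (-s)

lemma summable_nat_add_one_rpow_neg {s : ℝ} (hs : 1 < s) :
    Summable fun n : ℕ => ((n : ℝ) + 1) ^ (-s) := by
  have h := (summable_nat_add_iff 1).mpr (Real.summable_nat_rpow.mpr (neg_lt_neg hs))
  exact h.congr fun n => by push_cast; rfl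

lemma riemannZeta_ofReal_eq_zetaSeries {s : ℝ} (hs : 1 < s) :
    riemannZeta s = zetaSeries s := by
  rw [zeta_eq_tsum_one_div_nat_add_one_cpow (by simpa using hs), zetaSeries, ofReal_tsum]
  refine tsum_congr fun n => ?_
  have hn : (0 : ℝ) ≤ (n : ℝ) + 1 := by positivity
  rw [Real.rpow_neg hn, ofReal_inv, ofReal_cpow hn, one_div]
  push_cast
  rfl

lemma hasSum_zetaSeries_mul {s t : ℝ} (hs : 1 < s) (ht : 1 < t) :
    HasSum (fun p : ℕ × ℕ => ((p.1 : ℝ) + 1) ^ (-s) * ((p.2 : ℝ) + 1) ^ (-t))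
      (zetaSeries s * zetaSeries t) :=
  (summable_nat_add_one_rpow_neg hs).hasSum.mul (summable_nat_add_one_rpow_neg ht).hasSum
    ((summable_nat_add_one_rpow_neg hs).mul_of_nonneg (summable_nat_add_one_rpow_neg ht)
      (fun _ => by positivity) fun _ => by positivity)

lemma rpow_neg_mul_rpow_neg_add_swap {m n : ℝ} (hm : 0 < m) (hn : 0 < n) (s t : ℝ) :
    m ^ (-s) * n ^ (-t) + m ^ (-t) * n ^ (-s)
      = 2 * (m * n) ^ (-((s + t) / 2)) * Real.cosh ((s - t) / 2 * Real.log (n / m)) := by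
  simp only [Real.rpow_def_of_pos hm, Real.rpow_def_of_pos hn,
    Real.rpow_def_of_pos (mul_pos hm hn), Real.log_mul hm.ne' hn.ne',
    Real.log_div hn.ne' hm.ne', Real.cosh_eq, ← Real.exp_add]
  rw [mul_comm 2, mul_assoc, mul_div_cancel₀ _ two_ne_zero, mul_add, ← Real.exp_add,
    ← Real.exp_add]
  congr 2 <;> ring

/-- The summand of `2 ζ(s) ζ(t)` at `(m - 1, n - 1)` after pairing `(m, n)` with `(n, m)`. -/
noncomputable def pairedTerm (s t : ℝ) (p : ℕ × ℕ) : ℝ :=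
  2 * (((p.1 : ℝ) + 1) * ((p.2 : ℝ) + 1)) ^ (-((s + t) / 2)) *
    Real.cosh ((s - t) / 2 * Real.log (((p.2 : ℝ) + 1) / ((p.1 : ℝ) + 1)))

lemma hasSum_pairedTerm {s t : ℝ} (hs : 1 < s) (ht : 1 < t) :
    HasSum (pairedTerm s t) (2 * (zetaSeries s * zetaSeries t)) := by
  have h := (hasSum_zetaSeries_mul hs ht).add (hasSum_zetaSeries_mul ht hs)
  rw [mul_comm (zetaSeries t), ← two_mul] at h
  convert h using 1
  funext p
  rw [pairedTerm, rpow_neg_mul_rpow_neg_add_swap (by positivity) (by positivity)]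

lemma cosh_mul_le_cosh_mul {u v : ℝ} (hu : 0 ≤ u) (huv : u ≤ v) (L : ℝ) :
    Real.cosh (u * L) ≤ Real.cosh (v * L) := by
  rw [Real.cosh_le_cosh, abs_mul, abs_mul, abs_of_nonneg hu, abs_of_nonneg (hu.trans huv)]
  gcongr

lemma cosh_mul_lt_cosh_mul {u v L : ℝ} (hu : 0 ≤ u) (huv : u < v) (hL : L ≠ 0) :
    Real.cosh (u * L) < Real.cosh (v * L) := by
  rw [Real.cosh_lt_cosh, abs_mul, abs_mul, abs_of_nonneg hu, abs_of_nonneg (hu.trans huv.le)]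
  exact mul_lt_mul_of_pos_right huv (abs_pos.mpr hL)

lemma strictMonoOn_zetaSeries_mul_zetaSeries_sub (c : ℝ) :
    StrictMonoOn (fun a => zetaSeries a * zetaSeries (c - a)) (Ico (c / 2) (c - 1)) := by
  rintro a ⟨ha, ha'⟩ b ⟨hb, hb'⟩ hab
  have hle : ∀ p, pairedTerm a (c - a) p ≤ pairedTerm b (c - b) p := fun p => by
    simp only [pairedTerm, add_sub_cancel]
    gcongr
    exact cosh_mul_le_cosh_mul (by linarith) (by linarith) _
  -- the index `(0, 1)` is `(m, n) = (1, 2)`, off the diagonal, so `log (n / m) ≠ 0`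
  have hlt : pairedTerm a (c - a) (0, 1) < pairedTerm b (c - b) (0, 1) := by
    simp only [pairedTerm, add_sub_cancel]
    gcongr
    exact cosh_mul_lt_cosh_mul (by linarith) (by linarith) (Real.log_pos (by norm_num)).ne'
  have h := hasSum_lt hle hlt (hasSum_pairedTerm (by linarith) (by linarith))
    (hasSum_pairedTerm (by linarith) (by linarith))
  linarith

theorem zeta_prod_real_strictMonoOn
    (k : ℕ) :
    (∀ x : ℝ, x ∈ Set.Icc ((k : ℝ) / 4 - 1) ((k : ℝ) / 2 - 2) →
      (riemannZeta (2 * (x : ℂ) + 2) * riemannZeta ((k : ℂ) - 2 * (x : ℂ) - 2)).im = 0) ∧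
    StrictMonoOn
      (fun x : ℝ =>
        (riemannZeta (2 * (x : ℂ) + 2) * riemannZeta ((k : ℂ) - 2 * (x : ℂ) - 2)).re)
      (Set.Icc ((k : ℝ) / 4 - 1) ((k : ℝ) / 2 - 2)) := by
  have hmaps : MapsTo (fun x : ℝ => 2 * x + 2) (Icc ((k : ℝ) / 4 - 1) ((k : ℝ) / 2 - 2))
      (Ico ((k : ℝ) / 2) (k - 1)) := fun x hx => ⟨by linarith [hx.1], by linarith [hx.2]⟩
  have hzeta : ∀ x ∈ Icc ((k : ℝ) / 4 - 1) ((k : ℝ) / 2 - 2),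
      riemannZeta (2 * (x : ℂ) + 2) * riemannZeta ((k : ℂ) - 2 * (x : ℂ) - 2)
        = ((zetaSeries (2 * x + 2) * zetaSeries (k - (2 * x + 2)) : ℝ) : ℂ) := by
    intro x hx
    obtain ⟨ha, ha'⟩ := hmaps hx
    rw [ofReal_mul, ← riemannZeta_ofReal_eq_zetaSeries (by linarith),
      ← riemannZeta_ofReal_eq_zetaSeries (by linarith)]
    push_cast
    ring_nf
  refine ⟨fun x hx => by rw [hzeta x hx, ofReal_im], ?_⟩
  refine ((strictMonoOn_zetaSeries_mul_zetaSeries_sub (k : ℝ)).comp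
    (fun x _ y _ hxy => by linarith : StrictMonoOn (fun x : ℝ => 2 * x + 2) _) hmaps).congr ?_
  intro x hx
  simp only [Function.comp_apply, hzeta x hx, ofReal_re]
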